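/- Let G be a finite graph of treewidth at most k. Then G has a (2/3)-balanced separation of order at most k+1; that is, there exists a partition (L, X, R) of V(G) with no edge of G between L and R, |X| ≤ k+1, and |L|, |R| ≤ (2/3)|V(G)|. -/

import Mathlib

/-!
Choose for every vertex `v` a node `p v` whose bag contains `v`. A node `t` minimising
`∑ v, dist t (p v)` is a centroid: moving to the neighbour of `t` towards a branch of `T - t`
carrying more than half of the points `p v` would decrease that sum. The vertices outside
`bag t` are then distributed over the branches of `T - t`, at most `|V|/2` per branch, and no
edge of `G` joins two different branches because the nodes whose bags contain a vertex form a
subtree. Such branches can be grouped into two sides of at most `2|V|/3` vertices each, giving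
the separation `(L, bag t, R)`.
-/

open SimpleGraph

/-- `(T, bag)` is a tree decomposition of the graph `G`. -/
def IsTreeDecomp {V ι : Type} (G : SimpleGraph V) (T : SimpleGraph ι) (bag : ι → Set V) : Prop :=
  T.IsTree ∧
  (∀ v, ∃ i, v ∈ bag i) ∧
  (∀ u v, G.Adj u v → ∃ i, u ∈ bag i ∧ v ∈ bag i) ∧
  (∀ v : V, (T.induce {i | v ∈ bag i}).Connected)

/-- `G` has treewidth at most `k`: it has a tree decomposition all of whose bags
have at most `k + 1` vertices. -/
def TreewidthAtMost {V : Type} (G : SimpleGraph V) (k : ℕ) : Prop :=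
  ∃ (ι : Type) (T : SimpleGraph ι) (bag : ι → Set V),
    IsTreeDecomp G T bag ∧ ∀ i, (bag i).ncard ≤ k + 1

open Finset

lemma card_filter_mem_insert {α β : Type*} [DecidableEq β] (s : Finset α) (f : α → β)
    {S : Finset β} {b : β} (hb : b ∉ S) :
    #{a ∈ s | f a ∈ insert b S} = #{a ∈ s | f a ∈ S} + #{a ∈ s | f a = b} := by
  classical
  rw [← card_union_of_disjoint, ← filter_or]
  · simp only [mem_insert, or_comm]
  · exact disjoint_filter.2 fun a _ haS hab => hb (hab ▸ haS)

theorem exists_balanced_split_of_fibers {α β : Type*} [DecidableEq β] (s : Finset α) (f : α → β)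
    {n : ℕ} (hs : #s ≤ n) (hf : ∀ b, 2 * #{a ∈ s | f a = b} ≤ n) :
    ∃ S : Finset β, 3 * #{a ∈ s | f a ∈ S} ≤ 2 * n ∧ 3 * #{a ∈ s | f a ∉ S} ≤ 2 * n := by
  classical
  obtain ⟨S, hS, hmax⟩ := ((s.image f).powerset.filter
    fun S => 3 * #{a ∈ s | f a ∈ S} ≤ 2 * n).exists_max_image (fun S => #{a ∈ s | f a ∈ S})
    ⟨∅, by simp⟩
  rw [mem_filter, mem_powerset] at hS
  refine ⟨S, hS.2, ?_⟩
  by_contra! hbig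
  have htotal := card_filter_add_card_filter_not (s := s) (fun a => f a ∈ S)
  have hfull : ∀ a ∈ s, f a ∉ S → 2 * n < 3 * (#{x ∈ s | f x ∈ S} + #{x ∈ s | f x = f a}) := by
    intro a ha haS
    by_contra! hfit
    have hle := hmax (insert (f a) S) (by
      rw [mem_filter, mem_powerset, card_filter_mem_insert s f haS]
      exact ⟨insert_subset (mem_image_of_mem f ha) hS.1, hfit⟩)
    have hpos : 0 < #{x ∈ s | f x = f a} := card_pos.2 ⟨a, mem_filter.2 ⟨ha, rfl⟩⟩
    rw [card_filter_mem_insert s f haS] at hle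
    omega
  -- Two distinct fibres outside `S`, each too heavy to be added to `S`, would force
  -- `3 * #{a ∈ s | f a ∈ S} > n`.
  obtain ⟨a, ha⟩ : ({a ∈ s | f a ∉ S} : Finset α).Nonempty := card_pos.1 (by omega)
  rw [mem_filter] at ha
  obtain ⟨a', ha', hne⟩ : ∃ a' ∈ ({a ∈ s | f a ∉ S} : Finset α), f a' ≠ f a := by
    by_contra! hall
    have := card_le_card fun x hx => mem_filter.2 ⟨(mem_filter.1 hx).1, hall x hx⟩
    have := hf (f a)
    omega
  rw [mem_filter] at ha'
  have htwo : #{x ∈ s | f x = f a} + #{x ∈ s | f x = f a'} ≤ #{x ∈ s | f x ∉ S} := by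
    rw [← card_union_of_disjoint (disjoint_filter.2 fun x _ h h' => hne (h'.symm.trans h))]
    refine card_le_card (union_subset ?_ ?_) <;> intro x hx <;> rw [mem_filter] at hx ⊢
    exacts [⟨hx.1, hx.2 ▸ ha.2⟩, ⟨hx.1, hx.2 ▸ ha'.2⟩]
  have := hfull a ha.1 ha.2
  have := hfull a' ha'.1 ha'.2
  omega

namespace SimpleGraph

variable {V : Type*} {G : SimpleGraph V}

lemma Walk.notMem_support_of_deleteIncidenceSet {x : V} :
    ∀ {u v : V} (p : (G.deleteIncidenceSet x).Walk u v), u ≠ x → x ∉ p.support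
  | _, _, .nil, hu => by simpa using hu.symm
  | _, _, .cons h p, hu => by
    rw [deleteIncidenceSet_adj] at h
    simpa [hu.symm] using p.notMem_support_of_deleteIncidenceSet h.2.2

lemma reachable_deleteIncidenceSet_of_walk {x u v : V} (p : G.Walk u v) (hp : x ∉ p.support) :
    (G.deleteIncidenceSet x).Reachable u v :=
  ⟨p.toDeleteEdges _ fun e he hxe => by
    induction e using Sym2.ind with
    | h a b =>
      rcases (G.mk'_mem_incidenceSet_iff.1 hxe).2 with rfl | rfl
      exacts [hp (p.fst_mem_support_of_mem_edges he), hp (p.snd_mem_support_of_mem_edges he)]⟩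

lemma Connected.reachable_deleteIncidenceSet {s : Set V} (hs : (G.induce s).Connected) {x a b : V}
    (hx : x ∉ s) (ha : a ∈ s) (hb : b ∈ s) : (G.deleteIncidenceSet x).Reachable a b := by
  rw [← G.induce_deleteIncidenceSet_of_notMem hx] at hs
  exact (hs ⟨a, ha⟩ ⟨b, hb⟩).map (Embedding.induce s).toHom

lemma IsTree.length_eq_dist_of_isPath (hG : G.IsTree) {u v : V} {p : G.Walk u v}
    (hp : p.IsPath) : p.length = G.dist u v := by
  obtain ⟨q, hq, hlen⟩ := (hG.connected u v).exists_path_of_dist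
  rw [← hlen, (hG.existsUnique_path u v).unique hp hq]

lemma IsTree.dist_eq_dist_add_one_of_reachable_deleteIncidenceSet (hG : G.IsTree) {x x' y : V}
    (hx : G.Adj x x') (hy : (G.deleteIncidenceSet x).Reachable x' y) :
    G.dist x y = G.dist x' y + 1 := by
  classical
  obtain ⟨p⟩ := hy
  have hp : (p.bypass.mapLe (G.deleteIncidenceSet_le x)).IsPath := p.bypass_isPath.mapLe _
  have hxp : x ∉ (p.bypass.mapLe (G.deleteIncidenceSet_le x)).support := by
    simpa using p.bypass.notMem_support_of_deleteIncidenceSet hx.ne.symm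
  rw [← hG.length_eq_dist_of_isPath hp, ← hG.length_eq_dist_of_isPath (hp.cons (h := hx) hxp),
    Walk.length_cons]

section Centroid

variable {ι V : Type*} [Fintype V] {T : SimpleGraph ι}

-- Deleting the edges at `t` instead of `t` itself keeps `branch T t` total; `t` is a branch of
-- its own.
abbrev branch (T : SimpleGraph ι) (t x : ι) : (T.deleteIncidenceSet t).ConnectedComponent :=
  (T.deleteIncidenceSet t).connectedComponentMk x

noncomputable def distSum (T : SimpleGraph ι) (p : V → ι) (t : ι) : ℕ :=
  ∑ v, T.dist t (p v)

open Classical in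
lemma IsTree.exists_distSum_lt_of_heavy_branch (hT : T.IsTree) (p : V → ι) {t x : ι}
    (hx : x ≠ t) (hheavy : Fintype.card V < 2 * #{v | T.branch t (p v) = T.branch t x}) :
    ∃ t', distSum T p t' < distSum T p t := by
  obtain ⟨q, hq, -⟩ := (hT.connected t x).exists_path_of_dist
  cases q with
  | nil => exact absurd rfl hx
  | @cons _ t' _ hadj q =>
    have hreach : (T.deleteIncidenceSet t).Reachable t' x :=
      reachable_deleteIncidenceSet_of_walk q ((Walk.cons_isPath_iff _ _).1 hq).2
    set A : Finset V := {v | T.branch t (p v) = T.branch t x}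
    have hcloser : ∑ v ∈ A, (T.dist t' (p v) + 1) = ∑ v ∈ A, T.dist t (p v) :=
      sum_congr rfl fun v hv => (hT.dist_eq_dist_add_one_of_reachable_deleteIncidenceSet hadj
        (hreach.trans (ConnectedComponent.exact (mem_filter.1 hv).2).symm)).symm
    have hfarther : ∑ v ∈ Aᶜ, T.dist t' (p v) ≤ ∑ v ∈ Aᶜ, (T.dist t (p v) + 1) :=
      sum_le_sum fun v _ => by
        have := hadj.symm.reachable.dist_triangle_left (p v)
        rwa [dist_eq_one_iff_adj.2 hadj.symm, add_comm] at this
    rw [sum_add_distrib, sum_const, smul_eq_mul, mul_one] at hcloser hfarther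
    have hcard := card_add_card_compl A
    have h' := sum_add_sum_compl A fun v => T.dist t' (p v)
    have h := sum_add_sum_compl A fun v => T.dist t (p v)
    exact ⟨t', by unfold distSum; omega⟩

open Classical in
theorem IsTree.exists_centroid (hT : T.IsTree) (p : V → ι) :
    ∃ t, ∀ x ≠ t, 2 * #{v | T.branch t (p v) = T.branch t x} ≤ Fintype.card V := by
  have := hT.connected.nonempty
  refine ⟨Function.argmin (distSum T p), fun x hx => ?_⟩
  by_contra! hheavy
  obtain ⟨t', ht'⟩ := hT.exists_distSum_lt_of_heavy_branch p hx hheavy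
  exact Function.not_lt_argmin _ t' ht'

end Centroid

end SimpleGraph

lemma IsTreeDecomp.branch_eq_of_adj {V ι : Type} {G : SimpleGraph V} {T : SimpleGraph ι}
    {bag : ι → Set V} (hD : IsTreeDecomp G T bag) {t a b : ι} {u v : V} (hu : u ∉ bag t)
    (hv : v ∉ bag t) (ha : u ∈ bag a) (hb : v ∈ bag b) (huv : G.Adj u v) :
    T.branch t a = T.branch t b := by
  obtain ⟨-, -, hedge, hconn⟩ := hD
  obtain ⟨i, hui, hvi⟩ := hedge u v huv
  exact ConnectedComponent.sound <|
    ((hconn u).reachable_deleteIncidenceSet hu ha hui).trans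
      ((hconn v).reachable_deleteIncidenceSet hv hvi hb)

theorem statement12 {V : Type} [Fintype V] (G : SimpleGraph V) (k : ℕ)
    (h : TreewidthAtMost G k) :
    ∃ L X R : Set V,
      L ∪ X ∪ R = Set.univ ∧ Disjoint L X ∧ Disjoint L R ∧ Disjoint X R ∧
      (∀ u ∈ L, ∀ v ∈ R, ¬ G.Adj u v) ∧
      X.ncard ≤ k + 1 ∧
      3 * L.ncard ≤ 2 * Fintype.card V ∧
      3 * R.ncard ≤ 2 * Fintype.card V := by
  classical
  obtain ⟨ι, T, bag, hD, hsize⟩ := h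
  choose p hp using hD.2.1
  obtain ⟨t, hcentroid⟩ := hD.1.exists_centroid p
  set s : Finset V := {v | v ∉ bag t}
  have hfibre : ∀ C, 2 * #{v ∈ s | T.branch t (p v) = C} ≤ Fintype.card V := by
    intro C
    rcases ({v ∈ s | T.branch t (p v) = C} : Finset V).eq_empty_or_nonempty with hC | ⟨v, hv⟩
    · simp [hC]
    obtain ⟨hvs, rfl⟩ := mem_filter.1 hv
    have hpv : p v ≠ t := fun h => (mem_filter.1 hvs).2 (h ▸ hp v)
    exact (Nat.mul_le_mul_left 2 (card_le_card (filter_subset_filter _ (subset_univ s)))).trans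
      (hcentroid _ hpv)
  obtain ⟨S, hL, hR⟩ :=
    exists_balanced_split_of_fibers s (fun v => T.branch t (p v)) (card_le_univ s) hfibre
  refine ⟨({v ∈ s | T.branch t (p v) ∈ S} : Finset V), bag t,
    ({v ∈ s | T.branch t (p v) ∉ S} : Finset V), ?_, ?_, ?_, ?_, ?_, hsize t, ?_, ?_⟩
  · ext v
    simp only [s, coe_filter, mem_filter, mem_univ, true_and, Set.mem_union, Set.mem_ofPred_eq,
      Set.mem_univ, iff_true]
    tauto
  · simp +contextual [Set.disjoint_left, s]
  · simp +contextual [Set.disjoint_left, s]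
  · simp +contextual [Set.disjoint_left, s]
  · intro u hu v hv huv
    simp only [s, coe_filter, mem_filter, mem_univ, true_and, Set.mem_ofPred_eq] at hu hv
    exact hv.2 (hD.branch_eq_of_adj hu.1 hv.1 (hp u) (hp v) huv ▸ hu.2)
  · rwa [Set.ncard_coe_finset]
  · rwa [Set.ncard_coe_finset]
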